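/- A pair (≿, c), where ≿ is a complete and transitive relation on an arbitrary set 𝒜 and c is a choice correspondence on finite nonempty subsets of 𝒜, has a justifiability representation if and only if it satisfies IUA and Optimization. -/

import Mathlib

/-!
An alternative that is unchosen yet weakly better than the choice is maximal for no justification,
so deleting it leaves every justification's maxima unchanged: this is IUA.

Conversely, call `b` excluded by `A` when `b ≿ A` but `b ∉ c(A ∪ {b})`. By IUA an exclusion persists
in every larger menu, so no chosen alternative is excluded by a subset of its menu. Take as
justifications all total orders in which every exclusion of `b` by `A` is witnessed by an element of
`A` ranked above `b`. On a finite menu such an order is built greedily, always putting on top an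
alternative that nothing excludes; removing an excluded alternative never makes another one
unexcluded, which lets a chosen `a₀ ∈ c B₀` be kept on top of `B₀`. An ultrafilter limit of these
finite rankings is a global justification. Finally, an unchosen alternative that dominates the
choice is excluded by a subset of the menu, hence maximal for no justification.
-/

open Finset

/-- A total (weak) order: complete, transitive, antisymmetric. -/
def TotalOrderRel {α : Type*} (r : α → α → Prop) : Prop :=
  (∀ a b : α, r a b ∨ r b a) ∧ Transitive r ∧ ∀ a b : α, r a b → r b a → a = b

/-- The set of `r`-maximal elements of a set `S`. -/
def argmaxOn {α : Type*} (r : α → α → Prop) (S : Set α) : Set α :=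
  {x ∈ S | ∀ y ∈ S, r x y}

/-- The justifiable set `M(A)`: union over justifications of their maximizers on `A`. -/
def justSet {α : Type*} (M : Set (α → α → Prop)) (A : Finset α) : Set α :=
  ⋃ r ∈ M, argmaxOn r (A : Set α)

/-- A justifiability representation for `(pref, c)`. -/
def JustRep {α : Type*} (pref : α → α → Prop) (c : Finset α → Finset α)
    (M : Set (α → α → Prop)) : Prop :=
  M.Nonempty ∧ (∀ r ∈ M, TotalOrderRel r) ∧
    ∀ A : Finset α, A.Nonempty → (c A : Set α) = argmaxOn pref (justSet M A)

/-- Irrelevance of Unjustifiable Alternatives. -/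
def IUA {α : Type*} [DecidableEq α] (pref : α → α → Prop)
    (c : Finset α → Finset α) : Prop :=
  ∀ (A : Finset α) (a : α), a ∈ A → (∀ b ∈ c A, pref a b) → a ∉ c A →
    ∀ B : Finset α, A ⊆ B → c (B.erase a) = c B

/-- Optimization: all chosen elements are indifferent. -/
def Optimization {α : Type*} (pref : α → α → Prop) (c : Finset α → Finset α) : Prop :=
  ∀ A : Finset α, A.Nonempty → ∀ a ∈ c A, ∀ b ∈ c A, pref a b ∧ pref b a

/-- `A` excludes `b` from below: `b ∉ c(A ∪ {b})` and `b ≿ a` for all `a ∈ A`. -/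
def ExclBelow {α : Type*} [DecidableEq α] (pref : α → α → Prop)
    (c : Finset α → Finset α) (A : Finset α) (b : α) : Prop :=
  b ∉ c (insert b A) ∧ ∀ x ∈ A, pref b x

open Filter

section Forward

variable {α : Type*} {pref : α → α → Prop} {c : Finset α → Finset α}

theorem argmaxOn_subset (r : α → α → Prop) (S : Set α) : argmaxOn r S ⊆ S :=
  fun _ hx => hx.1

theorem justSet_subset (M : Set (α → α → Prop)) (A : Finset α) : justSet M A ⊆ A :=
  Set.iUnion₂_subset fun r _ => argmaxOn_subset r _

theorem JustRep.optimization {M : Set (α → α → Prop)} (h : JustRep pref c M) :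
    Optimization pref c := by
  intro A hA a ha b hb
  have hmax : ∀ x ∈ c A, x ∈ argmaxOn pref (justSet M A) := fun x hx => by
    rw [← h.2.2 A hA]; exact hx
  exact ⟨(hmax a ha).2 b (hmax b hb).1, (hmax b hb).2 a (hmax a ha).1⟩

variable [DecidableEq α]

theorem argmaxOn_erase_eq {r : α → α → Prop} (hr : TotalOrderRel r) {B : Finset α} {a y : α}
    (hy : y ∈ B) (hay : ¬ r a y) : argmaxOn r ↑(B.erase a) = argmaxOn r ↑B := by
  obtain ⟨hcomp, htrans, -⟩ := hr
  have hya : y ≠ a := by rintro rfl; exact hay ((hcomp y y).elim id id)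
  ext z
  simp only [argmaxOn, Set.mem_ofPred_eq, coe_erase, Set.mem_sdiff, Set.mem_singleton_iff,
    mem_coe]
  constructor
  · rintro ⟨⟨hzB, -⟩, hz⟩
    refine ⟨hzB, fun w hw => ?_⟩
    rcases eq_or_ne w a with rfl | hwa
    · exact htrans (hz y ⟨hy, hya⟩) ((hcomp w y).resolve_left hay)
    · exact hz w ⟨hw, hwa⟩
  · rintro ⟨hzB, hz⟩
    exact ⟨⟨hzB, by rintro rfl; exact hay (hz y hy)⟩, fun w hw => hz w hw.1⟩

theorem JustRep.iua {M : Set (α → α → Prop)} (htrans : Transitive pref)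
    (hne : ∀ A : Finset α, A.Nonempty → (c A).Nonempty) (h : JustRep pref c M) :
    IUA pref c := by
  obtain ⟨-, hMtot, hrep⟩ := h
  intro A a haA hdom hac B hAB
  obtain ⟨b, hb⟩ := hne A ⟨a, haA⟩
  have hbmax : b ∈ argmaxOn pref (justSet M A) := by rw [← hrep A ⟨a, haA⟩]; exact hb
  have haJ : a ∉ justSet M A := fun haJ => hac <| by
    rw [← mem_coe, hrep A ⟨a, haA⟩]
    exact ⟨haJ, fun y hy => htrans (hdom b hb) (hbmax.2 y hy)⟩
  have hbB : b ∈ B.erase a := mem_erase.mpr ⟨by rintro rfl; exact hac hb, hAB (hbmax.1 |>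
    justSet_subset M A)⟩
  have hJ : justSet M (B.erase a) = justSet M B := Set.iUnion₂_congr fun r hr => by
    obtain ⟨y, hyA, hay⟩ : ∃ y ∈ A, ¬ r a y := by
      by_contra! hay
      exact haJ (Set.mem_biUnion hr ⟨haA, hay⟩)
    exact argmaxOn_erase_eq (hMtot r hr) (hAB hyA) hay
  exact coe_injective (by rw [hrep _ ⟨b, hbB⟩, hrep B ⟨b, erase_subset a B hbB⟩, hJ])

end Forward

section Exclusion

variable {α : Type*} [DecidableEq α] {pref : α → α → Prop} {c : Finset α → Finset α}

theorem ExclBelow.choice_erase_eq (hIUA : IUA pref c) (hsub : ∀ A : Finset α, c A ⊆ A)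
    {A C : Finset α} {a : α} (h : ExclBelow pref c A a) (hC : insert a A ⊆ C) :
    c (C.erase a) = c C := by
  refine hIUA (insert a A) a (mem_insert_self a A) (fun b hb => ?_) h.1 C hC
  rcases mem_insert.mp (hsub _ hb) with rfl | hbA
  · exact absurd hb h.1
  · exact h.2 b hbA

theorem ExclBelow.notMem_choice (hIUA : IUA pref c) (hsub : ∀ A : Finset α, c A ⊆ A)
    {A C : Finset α} {a : α} (h : ExclBelow pref c A a) (hC : insert a A ⊆ C) :
    a ∉ c C := fun ha => by
  rw [← h.choice_erase_eq hIUA hsub hC] at ha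
  exact notMem_erase a C (hsub _ ha)

theorem exists_exclBelow_of_dominates (hcomp : ∀ a b : α, pref a b ∨ pref b a)
    (htrans : Transitive pref) (hIUA : IUA pref c) {S : Finset α} {m : α} (hm : m ∈ S)
    (hmc : m ∉ c S) (hdom : ∀ b ∈ c S, pref m b) : ∃ D ⊆ S, ExclBelow pref c D m := by
  induction S using Finset.strongInduction with
  | _ S ih =>
  by_cases hall : ∀ x ∈ S, pref m x
  · exact ⟨S, subset_rfl, by rwa [insert_eq_of_mem hm], hall⟩
  push Not at hall
  obtain ⟨z, hzS, hnmz⟩ := hall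
  have hzm : pref z m := (hcomp m z).resolve_left hnmz
  have hcz : c (S.erase z) = c S :=
    hIUA S z hzS (fun b hb => htrans hzm (hdom b hb)) (fun hz => hnmz (hdom z hz)) S subset_rfl
  have hmz : m ≠ z := by rintro rfl; exact hnmz ((hcomp m m).elim id id)
  obtain ⟨D, hD, hexcl⟩ := ih _ (erase_ssubset hzS) (mem_erase.mpr ⟨hmz, hm⟩)
    (by rwa [hcz]) (by rwa [hcz])
  exact ⟨D, hD.trans (erase_subset z S), hexcl⟩

def IsExcludedIn (pref : α → α → Prop) (c : Finset α → Finset α) (F : Finset α) (t : α) :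
    Prop :=
  ∃ A ⊆ F, ExclBelow pref c A t

theorem not_isExcludedIn_of_mem_choice (hIUA : IUA pref c) (hsub : ∀ A : Finset α, c A ⊆ A)
    {F : Finset α} {t : α} (ht : t ∈ c F) : ¬ IsExcludedIn pref c F t :=
  fun ⟨_, hA, hexcl⟩ => hexcl.notMem_choice hIUA hsub (insert_subset (hsub F ht) hA) ht

/-- If `y` helps to exclude `t`, then `t ≿ y`, and the set excluding `y` can take over its role. -/
theorem IsExcludedIn.erase (htrans : Transitive pref) (hIUA : IUA pref c)
    (hsub : ∀ A : Finset α, c A ⊆ A) {F : Finset α} {t y : α}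
    (ht : IsExcludedIn pref c F t) (hy : IsExcludedIn pref c F y) (hty : t ≠ y) :
    IsExcludedIn pref c (F.erase y) t := by
  obtain ⟨A, hAF, hA⟩ := ht
  obtain ⟨Ay, hAyF, hAy⟩ := hy
  by_cases hyA : y ∈ A
  swap
  · exact ⟨A, fun x hx => mem_erase.mpr ⟨by rintro rfl; exact hyA hx, hAF hx⟩, hA⟩
  set C := insert t (A ∪ Ay)
  have hAC : insert t A ⊆ C := insert_subset_insert t subset_union_left
  have hAyC : insert y Ay ⊆ C :=
    insert_subset (mem_insert_of_mem (mem_union_left Ay hyA)) (subset_union_right.trans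
      (subset_insert t _))
  refine ⟨(A ∪ Ay).erase y, erase_subset_erase y (union_subset hAF hAyF), ?_, ?_⟩
  · rw [← erase_insert_of_ne hty, hAy.choice_erase_eq hIUA hsub hAyC]
    exact hA.notMem_choice hIUA hsub hAC
  · intro x hx
    rcases mem_union.mp (mem_of_mem_erase hx) with hxA | hxAy
    · exact hA.2 x hxA
    · exact htrans (hA.2 y hyA) (hAy.2 x hxAy)

theorem exists_not_isExcludedIn (htrans : Transitive pref) (hIUA : IUA pref c)
    (hsub : ∀ A : Finset α, c A ⊆ A) {F B₀ : Finset α} {a₀ : α} (hB₀ : B₀ ⊆ F)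
    (ha₀ : a₀ ∈ c B₀) : ∃ t ∈ F, ¬ IsExcludedIn pref c F t ∧ (t = a₀ ∨ t ∉ B₀) := by
  induction F using Finset.strongInduction with
  | _ F ih =>
  by_cases hFB : F ⊆ B₀
  · obtain rfl := Subset.antisymm hB₀ hFB
    exact ⟨a₀, hsub _ ha₀, not_isExcludedIn_of_mem_choice hIUA hsub ha₀, Or.inl rfl⟩
  obtain ⟨y, hyF, hyB⟩ := not_subset.mp hFB
  by_cases hy : IsExcludedIn pref c F y
  · have hB₀y : B₀ ⊆ F.erase y := fun x hx => mem_erase.mpr ⟨by rintro rfl; exact hyB hx, hB₀ hx⟩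
    obtain ⟨t, htF, ht, htB⟩ := ih _ (erase_ssubset hyF) hB₀y
    exact ⟨t, mem_of_mem_erase htF, fun ht' => ht (ht'.erase htrans hIUA hsub hy
      (ne_of_mem_erase htF)), htB⟩
  · exact ⟨y, hyF, hy, Or.inr hyB⟩

end Exclusion

section Ranking

variable {α : Type*} [DecidableEq α] {pref : α → α → Prop} {c : Finset α → Finset α}

/-- Smaller values rank higher. -/
def IsExclusionRanking (pref : α → α → Prop) (c : Finset α → Finset α) (F : Finset α)
    (f : α → ℕ) : Prop :=
  Set.InjOn f F ∧ ∀ A ⊆ F, ∀ a ∈ F, ExclBelow pref c A a → ∃ x ∈ A, f x < f a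

theorem IsExclusionRanking.mono {F G : Finset α} {f : α → ℕ}
    (h : IsExclusionRanking pref c G f) (hFG : F ⊆ G) : IsExclusionRanking pref c F f :=
  ⟨h.1.mono (coe_subset.mpr hFG), fun A hA a ha => h.2 A (hA.trans hFG) a (hFG ha)⟩

theorem IsExclusionRanking.cons {F : Finset α} {t : α} {f : α → ℕ} (htF : t ∈ F)
    (ht : ¬ IsExcludedIn pref c F t) (hf : IsExclusionRanking pref c (F.erase t) f) :
    IsExclusionRanking pref c F (fun x => if x = t then 0 else f x + 1) := by
  refine ⟨fun x hx y hy hxy => ?_, fun A hA a ha hexcl => ?_⟩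
  · simp only at hxy
    split_ifs at hxy with hxt hyt hyt
    · exact hxt.trans hyt.symm
    · exact hf.1 (mem_erase.mpr ⟨hxt, hx⟩) (mem_erase.mpr ⟨hyt, hy⟩) (Nat.succ_injective hxy)
  have hat : a ≠ t := by rintro rfl; exact ht ⟨A, hA, hexcl⟩
  by_cases htA : t ∈ A
  · exact ⟨t, htA, by simp [hat]⟩
  have hAt : A ⊆ F.erase t := fun x hx => mem_erase.mpr ⟨ne_of_mem_of_not_mem hx htA, hA hx⟩
  obtain ⟨x, hxA, hx⟩ := hf.2 A hAt a (mem_erase.mpr ⟨hat, ha⟩) hexcl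
  exact ⟨x, hxA, by simp [hat, ne_of_mem_of_not_mem hxA htA, hx]⟩

theorem exists_isExclusionRanking (hIUA : IUA pref c) (hsub : ∀ A : Finset α, c A ⊆ A)
    (hne : ∀ A : Finset α, A.Nonempty → (c A).Nonempty) (F : Finset α) :
    ∃ f, IsExclusionRanking pref c F f := by
  induction F using Finset.strongInduction with
  | _ F ih =>
  rcases F.eq_empty_or_nonempty with rfl | hF
  · exact ⟨fun _ => 0, by simp [IsExclusionRanking]⟩
  obtain ⟨t, ht⟩ := hne F hF
  obtain ⟨f, hf⟩ := ih _ (erase_ssubset (hsub F ht))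
  exact ⟨_, hf.cons (hsub F ht) (not_isExcludedIn_of_mem_choice hIUA hsub ht)⟩

theorem exists_isExclusionRanking_of_mem_choice (htrans : Transitive pref) (hIUA : IUA pref c)
    (hsub : ∀ A : Finset α, c A ⊆ A) (hne : ∀ A : Finset α, A.Nonempty → (c A).Nonempty)
    {F B₀ : Finset α} {a₀ : α} (hB₀ : B₀ ⊆ F) (ha₀ : a₀ ∈ c B₀) :
    ∃ f, IsExclusionRanking pref c F f ∧ ∀ y ∈ B₀, f a₀ ≤ f y := by
  induction F using Finset.strongInduction with
  | _ F ih =>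
  obtain ⟨t, htF, ht, rfl | htB⟩ := exists_not_isExcludedIn htrans hIUA hsub hB₀ ha₀
  · obtain ⟨f, hf⟩ := exists_isExclusionRanking hIUA hsub hne (F.erase t)
    exact ⟨_, hf.cons htF ht, fun y _ => by simp⟩
  have hnet : ∀ y ∈ B₀, y ≠ t := fun y hy => by rintro rfl; exact htB hy
  obtain ⟨f, hf, htop⟩ := ih _ (erase_ssubset htF)
    (fun y hy => mem_erase.mpr ⟨hnet y hy, hB₀ hy⟩)
  refine ⟨_, hf.cons htF ht, fun y hy => ?_⟩
  simp [hnet y hy, hnet a₀ (hsub B₀ ha₀), htop y hy]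

end Ranking

section Limit

variable {α : Type*}

theorem totalOrderRel_of_injective {β : Type*} [LinearOrder β] {g : α → β}
    (hg : Function.Injective g) : TotalOrderRel fun x y => g x ≤ g y :=
  ⟨fun x y => le_total (g x) (g y), fun _ _ _ => le_trans, fun _ _ hxy hyx =>
    hg (le_antisymm hxy hyx)⟩

variable (α) in
noncomputable abbrev menuUltrafilter : Ultrafilter (Finset α) :=
  Ultrafilter.of atTop

theorem eventually_menuUltrafilter_superset (F : Finset α) :
    ∀ᶠ G in (menuUltrafilter α : Filter (Finset α)), F ⊆ G :=
  Ultrafilter.of_le _ (eventually_ge_atTop F)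

noncomputable def limitRank (f : Finset α → α → ℕ) (x : α) :
    Germ (menuUltrafilter α : Filter (Finset α)) ℕ :=
  ↑fun G => f G x

variable [DecidableEq α] {pref : α → α → Prop} {c : Finset α → Finset α}

def RespectsExclusions (pref : α → α → Prop) (c : Finset α → Finset α) (r : α → α → Prop) :
    Prop :=
  ∀ A a, ExclBelow pref c A a → ∃ x ∈ A, ¬ r a x

def justifications (pref : α → α → Prop) (c : Finset α → Finset α) : Set (α → α → Prop) :=
  {r | TotalOrderRel r ∧ RespectsExclusions pref c r}

theorem limitRank_injective {f : Finset α → α → ℕ} (hf : ∀ G, Set.InjOn (f G) G) :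
    Function.Injective (limitRank f) := fun x y hxy => by
  obtain ⟨G, hxyG, hG⟩ := ((Germ.coe_eq.mp hxy).and
    (eventually_menuUltrafilter_superset {x, y})).exists
  exact hf G (hG (mem_insert_self x _)) (hG (mem_insert_of_mem (mem_singleton_self y))) hxyG

theorem respectsExclusions_limitRank {f : Finset α → α → ℕ}
    (hf : ∀ G, IsExclusionRanking pref c G (f G)) :
    RespectsExclusions pref c fun x y => limitRank f x ≤ limitRank f y := by
  intro A a hexcl
  have hwit : ∀ᶠ G in (menuUltrafilter α : Filter (Finset α)), ∃ x ∈ (A : Set α), f G x < f G a :=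
    (eventually_menuUltrafilter_superset (insert a A)).mono fun G hG =>
      (hf G).2 A ((subset_insert a A).trans hG) a (hG (mem_insert_self a A)) hexcl
  obtain ⟨x, hxA, hx⟩ := (Ultrafilter.eventually_exists_mem_iff A.finite_toSet).mp hwit
  exact ⟨x, hxA, not_le.mpr (Germ.coe_lt.mpr hx)⟩

theorem limitRank_le_mem_justifications {f : Finset α → α → ℕ}
    (hf : ∀ G, IsExclusionRanking pref c G (f G)) :
    (fun x y => limitRank f x ≤ limitRank f y) ∈ justifications pref c :=
  ⟨totalOrderRel_of_injective (limitRank_injective fun G => (hf G).1),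
    respectsExclusions_limitRank hf⟩

end Limit

section Representation

variable {α : Type*} [DecidableEq α] {pref : α → α → Prop} {c : Finset α → Finset α}

theorem justifications_nonempty (hIUA : IUA pref c) (hsub : ∀ A : Finset α, c A ⊆ A)
    (hne : ∀ A : Finset α, A.Nonempty → (c A).Nonempty) : (justifications pref c).Nonempty := by
  choose f hf using exists_isExclusionRanking hIUA hsub hne
  exact ⟨_, limitRank_le_mem_justifications hf⟩

theorem mem_justSet_justifications (htrans : Transitive pref) (hIUA : IUA pref c)
    (hsub : ∀ A : Finset α, c A ⊆ A) (hne : ∀ A : Finset α, A.Nonempty → (c A).Nonempty)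
    {A : Finset α} {a : α} (ha : a ∈ c A) : a ∈ justSet (justifications pref c) A := by
  choose f hf htop using fun G : Finset α =>
    exists_isExclusionRanking_of_mem_choice htrans hIUA hsub hne (subset_union_right : A ⊆ G ∪ A) ha
  exact Set.mem_biUnion (limitRank_le_mem_justifications fun G => (hf G).mono subset_union_left)
    ⟨hsub A ha, fun y hy => Germ.coe_le.mpr (Eventually.of_forall fun G => htop G y hy)⟩

theorem notMem_justSet_justifications (hcomp : ∀ a b : α, pref a b ∨ pref b a)
    (htrans : Transitive pref) (hIUA : IUA pref c) {A : Finset α} {y : α} (hy : y ∉ c A)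
    (hdom : ∀ b ∈ c A, pref y b) : y ∉ justSet (justifications pref c) A := fun hyJ => by
  obtain ⟨r, hr, hymax⟩ := Set.mem_iUnion₂.mp hyJ
  obtain ⟨D, hDA, hD⟩ := exists_exclBelow_of_dominates hcomp htrans hIUA hymax.1 hy hdom
  obtain ⟨x, hxD, hyx⟩ := hr.2 D y hD
  exact hyx (hymax.2 x (hDA hxD))

theorem justRep_justifications (hcomp : ∀ a b : α, pref a b ∨ pref b a)
    (htrans : Transitive pref) (hsub : ∀ A : Finset α, c A ⊆ A)
    (hne : ∀ A : Finset α, A.Nonempty → (c A).Nonempty) (hIUA : IUA pref c)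
    (hOpt : Optimization pref c) : JustRep pref c (justifications pref c) := by
  refine ⟨justifications_nonempty hIUA hsub hne, fun r hr => hr.1, fun A hA => ?_⟩
  have hJ {a} : a ∈ c A → a ∈ justSet (justifications pref c) A :=
    mem_justSet_justifications htrans hIUA hsub hne
  ext x
  constructor
  · intro hx
    refine ⟨hJ hx, fun y hy => ?_⟩
    by_contra hxy
    have hyx : pref y x := (hcomp x y).resolve_left hxy
    exact notMem_justSet_justifications hcomp htrans hIUA
      (fun hyc => hxy (hOpt A hA x hx y hyc).1) (fun b hb => htrans hyx (hOpt A hA x hx b hb).1) hy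
  · rintro ⟨hxJ, hxmax⟩
    by_contra hx
    exact notMem_justSet_justifications hcomp htrans hIUA hx (fun b hb => hxmax b (hJ hb)) hxJ

end Representation

/-- Theorem 1: `(pref, c)` has a justifiability representation
iff it satisfies IUA and Optimization. -/
theorem justRep_iff_IUA_and_Optimization {α : Type*} [DecidableEq α]
    (pref : α → α → Prop) (c : Finset α → Finset α)
    (hcomp : ∀ a b : α, pref a b ∨ pref b a) (htrans : Transitive pref)
    (hsub : ∀ A : Finset α, c A ⊆ A)
    (hne : ∀ A : Finset α, A.Nonempty → (c A).Nonempty) :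
    (∃ M : Set (α → α → Prop), JustRep pref c M) ↔
      IUA pref c ∧ Optimization pref c :=
  ⟨fun ⟨_, hM⟩ => ⟨hM.iua htrans hne, hM.optimization⟩,
    fun ⟨hIUA, hOpt⟩ => ⟨_, justRep_justifications hcomp htrans hsub hne hIUA hOpt⟩⟩
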